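/- Let φ : (−1,1) → ℝ be a C² solution of Lφ = 0 that is nonincreasing and strictly positive. If there exists x₀ ∈ [0,1) with φ''(x₀) < 0, then φ(x) → −∞ as x → 1⁻ (which contradicts positivity). Formally: under these hypotheses, for all x₀ ∈ [0,1) one has φ''(x₀) ≥ 0. -/

import Mathlib

/-!
Suppose `φ''(x₀) < 0`. Along a solution, `g := 2λxφ' + αφ = (μ²/2)(1-x²)²φ''`, and the
integrating factor `w = exp(-2λ/(μ²(1-x²))) ∈ (0,1]` gives `(g w)' = (2λ+α) w φ' ≤ 0` because `φ`
is nonincreasing. Hence `(1-x²)²φ''` stays below a negative constant on `[x₀, 1)`, so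
`φ'' ≤ -B/(1-x)²`. Integrating twice, `φ' ≤ A - B/(1-x)` and `φ(x) ≤ C + A x + B log(1-x) → -∞`
as `x → 1⁻`, contradicting `φ > 0`.
-/

open Set Filter Topology Real

theorem HasDerivAt.nonpos_of_antitoneOn_of_isOpen {g : ℝ → ℝ} {g' x : ℝ} {s : Set ℝ}
    (hs : IsOpen s) (hx : x ∈ s) (hd : HasDerivAt g g' x) (hg : AntitoneOn g s) : g' ≤ 0 := by
  have hacc : AccPt x (𝓟 s) := by
    simpa using (PerfectSpace.univ_preperfect.open_inter hs) x ⟨hx, trivial⟩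
  exact hd.hasDerivWithinAt.nonpos_of_antitoneOn hacc hg

theorem Convex.antitoneOn_of_hasDerivAt_nonpos {f f' : ℝ → ℝ} {D : Set ℝ} (hD : Convex ℝ D)
    (hf : ∀ x ∈ D, HasDerivAt f (f' x) x) (hf' : ∀ x ∈ D, f' x ≤ 0) : AntitoneOn f D :=
  antitoneOn_of_hasDerivWithinAt_nonpos hD
    (fun x hx => (hf x hx).continuousAt.continuousWithinAt)
    (fun x hx => (hf x (interior_subset hx)).hasDerivWithinAt)
    (fun x hx => hf' x (interior_subset hx))

theorem sub_le_sub_of_hasDerivAt_le {f g f' g' : ℝ → ℝ} {a b x : ℝ}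
    (hf : ∀ y ∈ Ico a b, HasDerivAt f (f' y) y) (hg : ∀ y ∈ Ico a b, HasDerivAt g (g' y) y)
    (hfg : ∀ y ∈ Ico a b, f' y ≤ g' y) (hx : x ∈ Ico a b) : f x - f a ≤ g x - g a := by
  have hanti : AntitoneOn (fun y => f y - g y) (Ico a b) :=
    (convex_Ico a b).antitoneOn_of_hasDerivAt_nonpos (fun y hy => (hf y hy).sub (hg y hy))
      (fun y hy => sub_nonpos.2 (hfg y hy))
  have := hanti (left_mem_Ico.2 (hx.1.trans_lt hx.2)) hx hx.1
  linarith

theorem tendsto_nhdsLT_one_atBot_of_le_neg_div_one_sub_sq {f f' f'' : ℝ → ℝ} {a B : ℝ}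
    (ha : a < 1) (hB : 0 < B) (hf : ∀ x ∈ Ico a 1, HasDerivAt f (f' x) x)
    (hf' : ∀ x ∈ Ico a 1, HasDerivAt f' (f'' x) x)
    (hf'' : ∀ x ∈ Ico a 1, f'' x ≤ -(B / (1 - x) ^ 2)) :
    Tendsto f (𝓝[<] 1) atBot := by
  have hsub : ∀ x ∈ Ico a (1 : ℝ), HasDerivAt (fun y : ℝ => 1 - y) (-1) x := fun x _ => by
    simpa using (hasDerivAt_id x).const_sub 1
  have hne : ∀ x ∈ Ico a (1 : ℝ), 1 - x ≠ 0 := fun x hx => (sub_pos.2 hx.2).ne'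
  set A := f' a + B * (1 - a)⁻¹
  have hf'_le : ∀ x ∈ Ico a 1, f' x ≤ A - B * (1 - x)⁻¹ := by
    intro x hx
    have := sub_le_sub_of_hasDerivAt_le hf' (g := fun y => -(B * (1 - y)⁻¹))
      (fun y hy => (((hsub y hy).inv (hne y hy)).const_mul B).neg.congr_deriv (by ring))
      hf'' hx
    linarith
  set F : ℝ → ℝ := fun y => A * y + B * log (1 - y)
  have hF : ∀ x ∈ Ico a 1, HasDerivAt F (A - B * (1 - x)⁻¹) x := fun x hx =>
    (((hasDerivAt_id x).const_mul A).add
      (((hasDerivAt_log (hne x hx)).comp x (hsub x hx)).const_mul B)).congr_deriv (by simp; ring)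
  have hle : ∀ x ∈ Ico a 1, f x ≤ (f a - F a + A * x) + B * log (1 - x) := by
    intro x hx
    have := sub_le_sub_of_hasDerivAt_le hf hF hf'_le hx
    simp only [F] at this ⊢
    linarith
  have hlog : Tendsto (fun x : ℝ => log (1 - x)) (𝓝[<] 1) atBot := by
    refine tendsto_log_nhdsGT_zero.comp (tendsto_nhdsWithin_iff.2 ⟨?_, ?_⟩)
    · exact ((continuous_const.sub continuous_id).tendsto' 1 0 (sub_self 1)).mono_left
        nhdsWithin_le_nhds
    · filter_upwards [self_mem_nhdsWithin] with x (hx : x < 1) using sub_pos.2 hx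
  have hlin : Tendsto (fun x => f a - F a + A * x) (𝓝[<] 1) (𝓝 (f a - F a + A * 1)) :=
    ((continuous_const.add (continuous_const.mul continuous_id)).tendsto 1).mono_left
      nhdsWithin_le_nhds
  refine tendsto_atBot_mono' _ ?_ (hlin.add_atBot (hlog.const_mul_atBot hB))
  filter_upwards [Ico_mem_nhdsLT ha] using hle

theorem one_sub_sq_pos_of_mem_Ioo {x : ℝ} (hx : x ∈ Ioo (-1 : ℝ) 1) : 0 < 1 - x ^ 2 :=
  sub_pos.2 ((sq_lt_one_iff_abs_lt_one x).2 (abs_lt.2 hx))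

theorem exists_le_neg_div_one_sub_sq_of_antitoneOn {ψ w : ℝ → ℝ} {x₀ : ℝ}
    (hw : ∀ x ∈ Ioo (-1 : ℝ) 1, w x ∈ Ioc 0 1)
    (hanti : AntitoneOn (fun x => (1 - x ^ 2) ^ 2 * ψ x * w x) (Ioo (-1) 1))
    (hx₀ : x₀ ∈ Ioo (-1 : ℝ) 1) (hneg : ψ x₀ < 0) :
    ∃ B > 0, ∀ x ∈ Ico x₀ 1, ψ x ≤ -(B / (1 - x) ^ 2) := by
  set δ := -((1 - x₀ ^ 2) ^ 2 * ψ x₀ * w x₀)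
  have hδ : 0 < δ := by
    have := mul_pos (pow_pos (one_sub_sq_pos_of_mem_Ioo hx₀) 2) (hw x₀ hx₀).1
    nlinarith
  refine ⟨δ / 4, by positivity, fun x hx => ?_⟩
  have hxI : x ∈ Ioo (-1 : ℝ) 1 := ⟨hx₀.1.trans_le hx.1, hx.2⟩
  obtain ⟨hw0, hw1⟩ := hw x hxI
  have hPw : (1 - x ^ 2) ^ 2 * ψ x * w x ≤ -δ := by simpa [δ] using hanti hx₀ hxI hx.1
  have hP : (1 - x ^ 2) ^ 2 * ψ x ≤ -δ := by nlinarith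
  have hψ : ψ x < 0 := by
    have := pow_pos (one_sub_sq_pos_of_mem_Ioo hxI) 2
    nlinarith
  have hfactor : (1 - x ^ 2) ^ 2 ≤ 4 * (1 - x) ^ 2 := by
    have h2 : (1 + x) ^ 2 ≤ 2 ^ 2 := pow_le_pow_left₀ (by linarith [hxI.1]) (by linarith [hx.2]) 2
    calc (1 - x ^ 2) ^ 2 = (1 - x) ^ 2 * (1 + x) ^ 2 := by ring
      _ ≤ (1 - x) ^ 2 * 2 ^ 2 := by gcongr
      _ = 4 * (1 - x) ^ 2 := by ring
  have := mul_le_mul_of_nonpos_right hfactor hψ.le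
  rw [le_neg, div_le_iff₀ (pow_pos (sub_pos.2 hx.2) 2)]
  linarith

noncomputable def integratingFactor (lam mu x : ℝ) : ℝ := exp (-(2 * lam) / (mu ^ 2 * (1 - x ^ 2)))

theorem integratingFactor_mem_Ioc {lam mu x : ℝ} (hlam : 0 ≤ lam) (hx : x ∈ Ioo (-1 : ℝ) 1) :
    integratingFactor lam mu x ∈ Ioc 0 1 :=
  ⟨exp_pos _, exp_le_one_iff.2 (div_nonpos_of_nonpos_of_nonneg (by linarith)
    (mul_nonneg (sq_nonneg mu) (one_sub_sq_pos_of_mem_Ioo hx).le))⟩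

theorem hasDerivAt_integratingFactor {lam mu x : ℝ} (hmu : mu ≠ 0) (hx : x ∈ Ioo (-1 : ℝ) 1) :
    HasDerivAt (integratingFactor lam mu)
      (integratingFactor lam mu x * (-(4 * lam * x) / (mu ^ 2 * (1 - x ^ 2) ^ 2))) x := by
  have hx2 := one_sub_sq_pos_of_mem_Ioo hx
  have hden : HasDerivAt (fun y : ℝ => mu ^ 2 * (1 - y ^ 2)) (mu ^ 2 * -(2 * x)) x := by
    simpa using ((hasDerivAt_pow 2 x).const_sub 1).const_mul (mu ^ 2)
  have hquot : HasDerivAt (fun y : ℝ => -(2 * lam) / (mu ^ 2 * (1 - y ^ 2)))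
      (-(2 * lam) * (-(mu ^ 2 * -(2 * x)) / (mu ^ 2 * (1 - x ^ 2)) ^ 2)) x := by
    simpa [div_eq_mul_inv] using (hden.inv (by positivity)).const_mul (-(2 * lam))
  refine hquot.exp.congr_deriv ?_
  simp only [integratingFactor]
  field_simp
  ring

theorem antitoneOn_mul_integratingFactor {lam mu alp : ℝ} {φ φ' φ'' : ℝ → ℝ}
    (hlam : 0 ≤ lam) (hmu : mu ≠ 0) (halp : 0 ≤ alp)
    (hd1 : ∀ x ∈ Ioo (-1 : ℝ) 1, HasDerivAt φ (φ' x) x)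
    (hd2 : ∀ x ∈ Ioo (-1 : ℝ) 1, HasDerivAt φ' (φ'' x) x)
    (hode : ∀ x ∈ Ioo (-1 : ℝ) 1,
      mu ^ 2 / 2 * (1 - x ^ 2) ^ 2 * φ'' x - 2 * lam * x * φ' x - alp * φ x = 0)
    (hφ' : ∀ x ∈ Ioo (-1 : ℝ) 1, φ' x ≤ 0) :
    AntitoneOn (fun x => (1 - x ^ 2) ^ 2 * φ'' x * integratingFactor lam mu x) (Ioo (-1) 1) := by
  set w := integratingFactor lam mu
  set g : ℝ → ℝ := fun x => 2 * lam * x * φ' x + alp * φ x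
  have hg_eq : ∀ x ∈ Ioo (-1 : ℝ) 1, g x = mu ^ 2 / 2 * (1 - x ^ 2) ^ 2 * φ'' x := fun x hx => by
    linarith [hode x hx]
  have hgw : ∀ x ∈ Ioo (-1 : ℝ) 1, HasDerivAt (fun y => 2 / mu ^ 2 * (g y * w y))
      (2 / mu ^ 2 * ((2 * lam + alp) * w x * φ' x)) x := by
    intro x hx
    have hg : HasDerivAt g (2 * lam * φ' x + 2 * lam * x * φ'' x + alp * φ' x) x :=
      ((((hasDerivAt_id x).const_mul (2 * lam)).mul (hd2 x hx)).add
        ((hd1 x hx).const_mul alp)).congr_deriv (by simp)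
    refine ((hg.mul (hasDerivAt_integratingFactor hmu hx)).const_mul _).congr_deriv ?_
    rw [hg_eq x hx]
    have := one_sub_sq_pos_of_mem_Ioo hx
    field_simp
    ring
  refine ((convex_Ioo _ _).antitoneOn_of_hasDerivAt_nonpos hgw fun x hx => ?_).congr ?_
  · exact mul_nonpos_of_nonneg_of_nonpos (by positivity) (mul_nonpos_of_nonneg_of_nonpos
      (mul_nonneg (by linarith) (integratingFactor_mem_Ioc hlam hx).1.le) (hφ' x hx))
  · intro x hx
    simp only [hg_eq x hx]
    field_simp

/-- For a nonincreasing strictly positive solution `φ` of `Lφ = 0` on `(−1,1)`,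
one has `φ''(x₀) ≥ 0` for every `x₀ ∈ [0,1)`. -/
theorem stmt4 (lam mu alp : ℝ) (hlam : 0 < lam) (hmu : 0 < mu) (halp : 0 < alp)
    (φ φ' φ'' : ℝ → ℝ)
    (hd1 : ∀ x ∈ Set.Ioo (-1 : ℝ) 1, HasDerivAt φ (φ' x) x)
    (hd2 : ∀ x ∈ Set.Ioo (-1 : ℝ) 1, HasDerivAt φ' (φ'' x) x)
    (hode : ∀ x ∈ Set.Ioo (-1 : ℝ) 1,
      mu ^ 2 / 2 * (1 - x ^ 2) ^ 2 * φ'' x - 2 * lam * x * φ' x - alp * φ x = 0)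
    (hanti : AntitoneOn φ (Set.Ioo (-1 : ℝ) 1))
    (hpos : ∀ x ∈ Set.Ioo (-1 : ℝ) 1, 0 < φ x) :
    ∀ x₀ ∈ Set.Ico (0 : ℝ) 1, 0 ≤ φ'' x₀ := by
  intro x₀ hx₀
  by_contra! hneg
  have hx₀' : x₀ ∈ Ioo (-1 : ℝ) 1 := ⟨by linarith [hx₀.1], hx₀.2⟩
  have hφ' : ∀ x ∈ Ioo (-1 : ℝ) 1, φ' x ≤ 0 := fun x hx =>
    (hd1 x hx).nonpos_of_antitoneOn_of_isOpen isOpen_Ioo hx hanti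
  obtain ⟨B, hB, hφ''⟩ := exists_le_neg_div_one_sub_sq_of_antitoneOn
    (fun x hx => integratingFactor_mem_Ioc hlam.le hx)
    (antitoneOn_mul_integratingFactor hlam.le hmu.ne' halp.le hd1 hd2 hode hφ') hx₀' hneg
  have hIco : Ico x₀ 1 ⊆ Ioo (-1 : ℝ) 1 := fun x hx => ⟨hx₀'.1.trans_le hx.1, hx.2⟩
  have hbot : Tendsto φ (𝓝[<] 1) atBot :=
    tendsto_nhdsLT_one_atBot_of_le_neg_div_one_sub_sq hx₀.2 hB
      (fun x hx => hd1 x (hIco hx)) (fun x hx => hd2 x (hIco hx)) hφ''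
  have hφ_pos : ∀ᶠ x in 𝓝[<] (1 : ℝ), 0 < φ x := by
    filter_upwards [Ico_mem_nhdsLT hx₀.2] with x hx using hpos x (hIco hx)
  obtain ⟨x, hx_le, hx_pos⟩ := ((hbot.eventually (eventually_le_atBot 0)).and hφ_pos).exists
  linarith
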